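/- Let V : ((Fin N) → ℝ³) → ℝ be twice continuously differentiable and invariant under the diagonal action of SO(3). Let r be a stationary point of V (∇V(r) = 0). Then for every skew-symmetric 3×3 real matrix X, the infinitesimal rotation vector v defined by v i = X (r i) lies in the kernel of the Hessian: H(r) v = 0. -/

import Mathlib

/-- The configuration space `(ℝ³)^N` with its standard Euclidean inner product. -/
noncomputable abbrev Conf (N : ℕ) : Type :=
  PiLp 2 (fun _ : Fin N => EuclideanSpace ℝ (Fin 3))

/-- The diagonal action of a `3 × 3` matrix `A` on configurations:
`(g·r) i = A (r i)`. -/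
noncomputable def rotAct (N : ℕ) (A : Matrix (Fin 3) (Fin 3) ℝ) (r : Conf N) : Conf N :=
  WithLp.toLp 2 (fun i => Matrix.toEuclideanLin A (r i))

/-!
Differentiating `V (A r) = V r` shows that `∇V (A r) = 0` whenever `∇V r = 0`, so the gradient
vanishes on the whole `SO(3)`-orbit of a stationary point `r`. For skew-symmetric `X` the curve
`t ↦ exp (t X) r` stays in that orbit and has velocity `X r` at `t = 0`, so the chain rule
gives `H(r) (X r) = 0`.
-/

open NormedSpace Matrix
open scoped Gradient

theorem gradient_apply_eq_zero_of_comp_eq {𝕜 E : Type*} [RCLike 𝕜] [NormedAddCommGroup E]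
    [InnerProductSpace 𝕜 E] [CompleteSpace E] {f : E → 𝕜} (e : E ≃L[𝕜] E) (hf : f ∘ e = f)
    {x : E} (hx : ∇ f x = 0) : ∇ f (e x) = 0 := by
  simp only [gradient, LinearIsometryEquiv.map_eq_zero_iff] at hx ⊢
  have hcomp := e.comp_right_fderiv (f := f) (x := x)
  rw [hf, hx] at hcomp
  ext v
  simpa using congr($hcomp (e.symm v)).symm

namespace Matrix

variable {n : Type*} [Fintype n] [DecidableEq n]

theorem isUnit_det_exp (X : Matrix n n ℝ) : IsUnit (exp X).det :=
  (isUnit_iff_isUnit_det _).mp (isUnit_exp X)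

theorem exp_mem_orthogonalGroup {X : Matrix n n ℝ} (hX : Xᵀ = -X) :
    exp X ∈ orthogonalGroup n ℝ := by
  rw [mem_orthogonalGroup_iff, ← exp_transpose, hX, exp_neg, mul_nonsing_inv _ (isUnit_det_exp X)]

theorem det_exp_pos (X : Matrix n n ℝ) : 0 < (exp X).det := by
  have hhalf : exp X = exp ((1 / 2 : ℝ) • X) * exp ((1 / 2 : ℝ) • X) := by
    rw [← exp_add_of_commute _ _ (Commute.refl _), ← add_smul]
    norm_num
  rw [hhalf, det_mul, ← sq]
  exact sq_pos_of_ne_zero (isUnit_det_exp _).ne_zero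

theorem exp_mem_specialOrthogonalGroup {X : Matrix n n ℝ} (hX : Xᵀ = -X) :
    exp X ∈ specialOrthogonalGroup n ℝ := by
  have horth := exp_mem_orthogonalGroup hX
  have hsq : (exp X).det * (exp X).det = 1 := by
    simpa using congr_arg det ((mem_orthogonalGroup_iff n ℝ).mp horth)
  exact ⟨horth, (mul_self_eq_one_iff.mp hsq).resolve_right (by linarith [det_exp_pos X])⟩

end Matrix

section rotAct

variable (N : ℕ)

theorem rotAct_one (r : Conf N) : rotAct N 1 r = r := by
  ext i j
  simp [rotAct]

theorem rotAct_mul (A B : Matrix (Fin 3) (Fin 3) ℝ) (r : Conf N) :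
    rotAct N (A * B) r = rotAct N A (rotAct N B r) := by
  ext i
  simp [rotAct, mulVec_mulVec]

noncomputable def rotActHom : Matrix (Fin 3) (Fin 3) ℝ →* (Conf N →L[ℝ] Conf N) where
  toFun A :=
    { toFun := rotAct N A
      map_add' r s := by ext i; simp [rotAct]
      map_smul' c r := by ext i; simp [rotAct]
      cont := by unfold rotAct; fun_prop }
  map_one' := by ext r : 1; exact rotAct_one N r
  map_mul' A B := by ext r : 1; exact rotAct_mul N A B r

noncomputable def rotActEquiv (U : (Matrix (Fin 3) (Fin 3) ℝ)ˣ) : Conf N ≃L[ℝ] Conf N :=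
  ContinuousLinearEquiv.unitsEquiv ℝ (Conf N) (Units.map (rotActHom N) U)

noncomputable def rotActOrbitMap (r : Conf N) : Matrix (Fin 3) (Fin 3) ℝ →L[ℝ] Conf N where
  toFun A := rotAct N A r
  map_add' A B := by ext i; simp [rotAct]
  map_smul' c A := by ext i; simp [rotAct]
  cont := by unfold rotAct; simp only [toLpLin_apply]; fun_prop

/- With the matrix norm instances below in scope, the search for this instance times out. -/
local instance : ContinuousSMul ℝ (Conf N) := inferInstance

attribute [local instance] Matrix.linftyOpNormedRing Matrix.linftyOpNormedAlgebra in
theorem hasDerivAt_rotAct_exp_smul (r : Conf N) (X : Matrix (Fin 3) (Fin 3) ℝ) :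
    HasDerivAt (fun t : ℝ => rotAct N (exp (t • X)) r) (rotAct N X r) 0 := by
  have hexp : HasDerivAt (fun t : ℝ => exp (t • X)) X 0 := by
    have h := hasDerivAt_exp_smul_const (𝕂 := ℝ) X 0
    simp only [zero_smul, exp_zero, one_mul] at h
    -- not `simpa`: the two sides carry different, only definitionally equal, matrix topologies
    exact h
  exact (rotActOrbitMap N r).hasFDerivAt.comp_hasDerivAt 0 hexp

end rotAct

theorem hessian_kills_infinitesimal_rotations_general (N : ℕ) (V : Conf N → ℝ)
    (hinv : ∀ A : Matrix (Fin 3) (Fin 3) ℝ, A ∈ Matrix.orthogonalGroup (Fin 3) ℝ →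
      A.det = 1 → ∀ r : Conf N, V (rotAct N A r) = V r)
    (H : Conf N → Conf N →L[ℝ] Conf N)
    (hH : ∀ x : Conf N, HasFDerivAt (gradient V) (H x) x)
    (r : Conf N) (hstat : gradient V r = 0)
    (X : Matrix (Fin 3) (Fin 3) ℝ) (hX : X.transpose = -X) :
    H r (WithLp.toLp 2 (fun i => Matrix.toEuclideanLin X (r i))) = 0 := by
  have hflat : ∀ t : ℝ, ∇ V (rotAct N (exp (t • X)) r) = 0 := fun t => by
    obtain ⟨horth, hdet⟩ := exp_mem_specialOrthogonalGroup (X := t • X)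
      (by rw [transpose_smul, hX, smul_neg])
    exact gradient_apply_eq_zero_of_comp_eq (rotActEquiv N (isUnit_exp (t • X)).unit)
      (funext (hinv _ horth hdet)) hstat
  have hchain := (hH _).comp_hasDerivAt (0 : ℝ) (hasDerivAt_rotAct_exp_smul N r X)
  simp only [zero_smul, exp_zero, rotAct_one, Function.comp_def, hflat] at hchain
  exact hchain.unique (hasDerivAt_const 0 0)

/-- if `V` is C² and invariant under the diagonal `SO(3)`-action and `r` is a
stationary point of `V`, then for every skew-symmetric `3 × 3` matrix `X`, the infinitesimal
rotation vector `v i = X (r i)` lies in the kernel of the Hessian `H(r)` (the derivative of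
the gradient vector field). -/
theorem hessian_kills_infinitesimal_rotations (N : ℕ) (V : Conf N → ℝ)
    (hV : ContDiff ℝ 2 V)
    (hinv : ∀ A : Matrix (Fin 3) (Fin 3) ℝ, A ∈ Matrix.orthogonalGroup (Fin 3) ℝ →
      A.det = 1 → ∀ r : Conf N, V (rotAct N A r) = V r)
    (H : Conf N → Conf N →L[ℝ] Conf N)
    (hH : ∀ x : Conf N, HasFDerivAt (gradient V) (H x) x)
    (r : Conf N) (hstat : gradient V r = 0)
    (X : Matrix (Fin 3) (Fin 3) ℝ) (hX : X.transpose = -X) :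
    H r (WithLp.toLp 2 (fun i => Matrix.toEuclideanLin X (r i))) = 0 :=
  hessian_kills_infinitesimal_rotations_general N V hinv H hH r hstat X hX
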